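/- With 𝒮ᵢ as above and ℛᵢ the automorphism of the pair (Fₙ, Mₙ) swapping xᵢ ↔ x_{i+1} and Kᵢ ↔ K_{i+1} (fixing other generators, extended semilinearly), the mixed relation ℛ_{i+1} ∘ ℛᵢ ∘ 𝒮_{i+1} = 𝒮ᵢ ∘ ℛ_{i+1} ∘ ℛᵢ holds for 1 ≤ i ≤ n−2. -/

import Mathlib

/-- The free group `Fₙ` on generators `x₀, …, x_{n-1}` (0-based indexing). -/
abbrev FG (n : ℕ) := FreeGroup (Fin n)
/-- The group ring `ℤ[Fₙ]`. -/
abbrev GR (n : ℕ) := MonoidAlgebra ℤ (FG n)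
/-- The free `ℤ[Fₙ]`-module `Mₙ` on `K₀, …, K_{n-1}`. -/
abbrev M (n : ℕ) := Fin n →₀ GR n

/-- The generator `xᵢ`. -/
def X {n : ℕ} (i : Fin n) : FG n := FreeGroup.of i
/-- The module generator `Kᵢ`. -/
noncomputable def K {n : ℕ} (i : Fin n) : M n := Finsupp.single i 1

/-- The action `g ▷ m` of `Fₙ` on `Mₙ`, via the `ℤ[Fₙ]`-module structure. -/
noncomputable def act {n : ℕ} (g : FG n) (m : M n) : M n :=
  (MonoidAlgebra.of ℤ (FG n) g) • m

def fin0 (n i : ℕ) (h : i + 1 < n) : Fin n := ⟨i, Nat.lt_of_succ_lt h⟩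
def fin1 (n i : ℕ) (h : i + 1 < n) : Fin n := ⟨i + 1, h⟩

/-- The additive endomorphism of `Mₙ`, semilinear over the group endomorphism `f1`
(i.e. `m ↦ g ▷ m` goes to `m ↦ f1 g ▷ m`), determined by the images `t i` of the
generators `K i`. -/
noncomputable def lift2 {n : ℕ} (f1 : FG n →* FG n) (t : Fin n → M n) : M n →+ M n :=
  Finsupp.liftAddHom fun i =>
    { toFun := fun r => (MonoidAlgebra.mapDomainRingHom ℤ f1 r) • t i
      map_zero' := by simp
      map_add' := by intro a b; rw [map_add, add_smul] }

/-- First component of the lifted Artin automorphism `𝒮ᵢ`. -/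
def S1 (n i : ℕ) (h : i + 1 < n) : FG n →* FG n :=
  FreeGroup.lift fun j =>
    if (j : ℕ) = i then X (fin1 n i h)
    else if (j : ℕ) = i + 1 then (X (fin1 n i h))⁻¹ * X (fin0 n i h) * X (fin1 n i h)
    else X j

/-- Second component of the lifted Artin automorphism `𝒮ᵢ`:
`Kᵢ ↦ Kᵢ + K_{i+1} − x_{i+1}⁻¹ ▷ Kᵢ`, `K_{i+1} ↦ x_{i+1}⁻¹ ▷ Kᵢ`, fixing other `Kⱼ`,
extended semilinearly over `𝒮ᵢ¹`. -/
noncomputable def S2 (n i : ℕ) (h : i + 1 < n) : M n →+ M n :=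
  lift2 (S1 n i h) fun j =>
    if (j : ℕ) = i then
      K (fin0 n i h) + K (fin1 n i h) - act (X (fin1 n i h))⁻¹ (K (fin0 n i h))
    else if (j : ℕ) = i + 1 then act (X (fin1 n i h))⁻¹ (K (fin0 n i h))
    else K j

/-- First component of the inverse `𝒮̄ᵢ`: `xᵢ ↦ xᵢ x_{i+1} xᵢ⁻¹`, `x_{i+1} ↦ xᵢ`. -/
def Sbar1 (n i : ℕ) (h : i + 1 < n) : FG n →* FG n :=
  FreeGroup.lift fun j =>
    if (j : ℕ) = i then X (fin0 n i h) * X (fin1 n i h) * (X (fin0 n i h))⁻¹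
    else if (j : ℕ) = i + 1 then X (fin0 n i h)
    else X j

/-- Second component of the inverse `𝒮̄ᵢ`: `Kᵢ ↦ xᵢ ▷ K_{i+1}`,
`K_{i+1} ↦ Kᵢ + K_{i+1} − xᵢ ▷ K_{i+1}`, fixing other `Kⱼ`. -/
noncomputable def Sbar2 (n i : ℕ) (h : i + 1 < n) : M n →+ M n :=
  lift2 (Sbar1 n i h) fun j =>
    if (j : ℕ) = i then act (X (fin0 n i h)) (K (fin1 n i h))
    else if (j : ℕ) = i + 1 then
      K (fin0 n i h) + K (fin1 n i h) - act (X (fin0 n i h)) (K (fin1 n i h))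
    else K j

/-- First component of the transposition automorphism `ℛᵢ`. -/
def R1 (n i : ℕ) (h : i + 1 < n) : FG n →* FG n :=
  FreeGroup.lift fun j =>
    if (j : ℕ) = i then X (fin1 n i h)
    else if (j : ℕ) = i + 1 then X (fin0 n i h)
    else X j

/-- Second component of `ℛᵢ`: swaps `Kᵢ` and `K_{i+1}`, fixing other `Kⱼ`. -/
noncomputable def R2 (n i : ℕ) (h : i + 1 < n) : M n →+ M n :=
  lift2 (R1 n i h) fun j =>
    if (j : ℕ) = i then K (fin1 n i h)
    else if (j : ℕ) = i + 1 then K (fin0 n i h)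
    else K j

/-- First component of the inversion automorphism `𝒯ᵢ`: `xᵢ ↦ xᵢ⁻¹`. -/
def T1 (n i : ℕ) (h : i < n) : FG n →* FG n :=
  FreeGroup.lift fun j => if (j : ℕ) = i then (X (⟨i, h⟩ : Fin n))⁻¹ else X j

/-- Second component of `𝒯ᵢ`: fixes each `Kⱼ`, extended semilinearly over `𝒯ᵢ¹`. -/
noncomputable def T2 (n i : ℕ) (h : i < n) : M n →+ M n :=
  lift2 (T1 n i h) fun j => K j

/-!
`ℛ_{i+1} ∘ ℛᵢ` relabels the generators by the permutation `σ = (i+1 i+2)(i i+1)`, and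
relabelling by any permutation `σ` conjugates the Artin automorphism at a pair `(a, b)` into
the one at `(σ a, σ b)`. As `σ` sends `(i+1, i+2)` to `(i, i+1)`, the relation follows, in both
components at once.
-/

section

variable {n : ℕ}

lemma lift2_single (f1 : FG n →* FG n) (t : Fin n → M n) (j : Fin n) (r : GR n) :
    lift2 f1 t (Finsupp.single j r) = MonoidAlgebra.mapDomainRingHom ℤ f1 r • t j := by
  simp [lift2]

lemma lift2_K (f1 : FG n →* FG n) (t : Fin n → M n) (j : Fin n) : lift2 f1 t (K j) = t j := by
  simp [K, lift2_single]

lemma lift2_smul (f1 : FG n →* FG n) (t : Fin n → M n) (a : GR n) (m : M n) :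
    lift2 f1 t (a • m) = MonoidAlgebra.mapDomainRingHom ℤ f1 a • lift2 f1 t m := by
  induction m using Finsupp.induction_linear with
  | zero => simp
  | add f g hf hg => rw [smul_add, map_add, hf, hg, map_add, smul_add]
  | single j r => rw [Finsupp.smul_single', lift2_single, lift2_single, map_mul, mul_smul]

lemma lift2_act (f1 : FG n →* FG n) (t : Fin n → M n) (g : FG n) (m : M n) :
    lift2 f1 t (act g m) = act (f1 g) (lift2 f1 t m) := by
  rw [act, lift2_smul, act]
  congr 1
  simp [MonoidAlgebra.of_apply]

lemma lift2_comp (f1 g1 : FG n →* FG n) (t s : Fin n → M n) :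
    (lift2 f1 t).comp (lift2 g1 s) = lift2 (f1.comp g1) fun j => lift2 f1 t (s j) := by
  refine Finsupp.addHom_ext fun j r => ?_
  simp only [AddMonoidHom.comp_apply, lift2_single, lift2_smul]
  rw [MonoidAlgebra.mapDomainRingHom_comp, RingHom.comp_apply]

def artin1 (a b : Fin n) : FG n →* FG n :=
  FreeGroup.lift fun j => if j = a then X b else if j = b then (X b)⁻¹ * X a * X b else X j

noncomputable def artin2 (a b : Fin n) : M n →+ M n :=
  lift2 (artin1 a b) fun j =>
    if j = a then K a + K b - act (X b)⁻¹ (K a) else if j = b then act (X b)⁻¹ (K a) else K j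

noncomputable def relabel2 (σ : Equiv.Perm (Fin n)) : M n →+ M n :=
  lift2 (FreeGroup.map σ) fun j => K (σ j)

lemma map_comp_map (σ τ : Equiv.Perm (Fin n)) :
    (FreeGroup.map σ).comp (FreeGroup.map τ) = FreeGroup.map (σ * τ) := by
  ext j; simp

lemma relabel2_comp (σ τ : Equiv.Perm (Fin n)) :
    (relabel2 σ).comp (relabel2 τ) = relabel2 (σ * τ) := by
  rw [relabel2, relabel2, lift2_comp, map_comp_map, relabel2]
  simp only [lift2_K, Equiv.Perm.coe_mul, Function.comp_apply]

lemma map_comp_artin1 (σ : Equiv.Perm (Fin n)) (a b : Fin n) :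
    (FreeGroup.map σ).comp (artin1 a b) = (artin1 (σ a) (σ b)).comp (FreeGroup.map σ) := by
  ext j; simp [artin1, X, apply_ite (FreeGroup.map σ)]

lemma relabel2_comp_artin2 (σ : Equiv.Perm (Fin n)) (a b : Fin n) :
    (relabel2 σ).comp (artin2 a b) = (artin2 (σ a) (σ b)).comp (relabel2 σ) := by
  rw [relabel2, artin2, artin2, lift2_comp, lift2_comp, map_comp_artin1]
  congr 1; funext j
  simp [lift2_K, lift2_act, X, apply_ite (lift2 _ _)]

lemma S1_eq_artin1 (i : ℕ) (h : i + 1 < n) : S1 n i h = artin1 (fin0 n i h) (fin1 n i h) := by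
  ext j; simp [S1, artin1, fin0, fin1, Fin.ext_iff]

lemma S2_eq_artin2 (i : ℕ) (h : i + 1 < n) : S2 n i h = artin2 (fin0 n i h) (fin1 n i h) := by
  rw [S2, artin2, S1_eq_artin1]
  congr 1; funext j
  simp [fin0, fin1, Fin.ext_iff]

lemma R1_eq_map_swap (i : ℕ) (h : i + 1 < n) :
    R1 n i h = FreeGroup.map (Equiv.swap (fin0 n i h) (fin1 n i h)) := by
  ext j; simp [R1, X, Equiv.swap_apply_def, fin0, fin1, Fin.ext_iff, apply_ite FreeGroup.of]

lemma R2_eq_relabel2_swap (i : ℕ) (h : i + 1 < n) :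
    R2 n i h = relabel2 (Equiv.swap (fin0 n i h) (fin1 n i h)) := by
  rw [R2, relabel2, R1_eq_map_swap]
  congr 1; funext j
  simp [Equiv.swap_apply_def, fin0, fin1, Fin.ext_iff, apply_ite K]

end

/-- mixed relation `ℛ_{i+1} ∘ ℛᵢ ∘ 𝒮_{i+1} = 𝒮ᵢ ∘ ℛ_{i+1} ∘ ℛᵢ` for the
automorphisms of the pair `(Fₙ, Mₙ)`. -/
theorem liftedArtin_mixed_RRS (n i : ℕ) (h2 : i + 2 < n) (h1 : i + 1 < n) :
    (R1 n (i + 1) h2).comp ((R1 n i h1).comp (S1 n (i + 1) h2)) =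
      (S1 n i h1).comp ((R1 n (i + 1) h2).comp (R1 n i h1)) ∧
    (R2 n (i + 1) h2).comp ((R2 n i h1).comp (S2 n (i + 1) h2)) =
      (S2 n i h1).comp ((R2 n (i + 1) h2).comp (R2 n i h1)) := by
  set σ := Equiv.swap (fin0 n (i + 1) h2) (fin1 n (i + 1) h2) *
    Equiv.swap (fin0 n i h1) (fin1 n i h1)
  have hi : i + 1 + 1 ≠ i := by omega
  have hσ0 : σ (fin0 n (i + 1) h2) = fin0 n i h1 := by
    simp [σ, Equiv.swap_apply_def, fin0, fin1, Fin.ext_iff, hi.symm]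
  have hσ1 : σ (fin1 n (i + 1) h2) = fin1 n i h1 := by
    simp [σ, Equiv.swap_apply_def, fin0, fin1, Fin.ext_iff, hi]
  constructor
  · rw [R1_eq_map_swap, R1_eq_map_swap, S1_eq_artin1, S1_eq_artin1, ← MonoidHom.comp_assoc,
      map_comp_map, map_comp_artin1, hσ0, hσ1]
  · rw [R2_eq_relabel2_swap, R2_eq_relabel2_swap, S2_eq_artin2, S2_eq_artin2,
      ← AddMonoidHom.comp_assoc, relabel2_comp, relabel2_comp_artin2, hσ0, hσ1]
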